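/- arXiv:1509.02841 — 2 statements merged into one kernel-verified Lean document; each statement's English description precedes it below -/
import Mathlib

section
/- Let G be a strongly connected directed graph and let (x,y) be an edge of G. If G \ (x,y) contains two edge-disjoint directed paths from x to y, then for every pair of vertices u, w that are 2-edge-connected in G (i.e., there are two edge-disjoint paths from u to w and two edge-disjoint paths from w to u), u and w remain 2-edge-connected in G \ (x,y). -/
variable {V : Type*}

/-- A walk in a digraph given by its edge set `E`, recorded as a list of edges. -/
inductive IsWalk (E : Set (V × V)) : V → V → List (V × V) → Prop
  | nil (u : V) : IsWalk E u u []
  | cons {u v w : V} {p : List (V × V)} (h : (u, v) ∈ E) (hp : IsWalk E v w p) :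
      IsWalk E u w ((u, v) :: p)

def Reaches (E : Set (V × V)) (u v : V) : Prop := ∃ p, IsWalk E u v p

def StronglyConnected (E : Set (V × V)) : Prop := ∀ u v : V, Reaches E u v

/-- Two edge-disjoint directed paths from `u` to `v`. -/
def TwoEDP (E : Set (V × V)) (u v : V) : Prop :=
  ∃ p q, IsWalk E u v p ∧ IsWalk E u v q ∧ p.Disjoint q

/-- `u` and `v` are 2-edge-connected. -/
def TwoEC (E : Set (V × V)) (u v : V) : Prop := TwoEDP E u v ∧ TwoEDP E v u

/-- A 2-edge-connected block: a maximal set of pairwise 2-edge-connected vertices. -/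
def Is2ECBlock (E : Set (V × V)) (B : Set V) : Prop :=
  (∀ u ∈ B, ∀ v ∈ B, TwoEC E u v) ∧
    ∀ C : Set V, B ⊆ C → (∀ u ∈ C, ∀ v ∈ C, TwoEC E u v) → C = B

def SameBlocks (E E' : Set (V × V)) : Prop :=
  ∀ B : Set V, Is2ECBlock E B ↔ Is2ECBlock E' B

/-- A strong bridge: an edge whose removal increases the number of strongly
connected components, i.e. destroys the mutual reachability of some pair. -/
def IsStrongBridge (E : Set (V × V)) (e : V × V) : Prop :=
  e ∈ E ∧ ∃ u v : V, (Reaches E u v ∧ Reaches E v u) ∧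
    ¬ (Reaches (E \ {e}) u v ∧ Reaches (E \ {e}) v u)

/-- A 2-edge-connected digraph: strongly connected and stays so after deleting any edge. -/
def Is2ECGraph (E : Set (V × V)) : Prop :=
  StronglyConnected E ∧ ∀ e ∈ E, StronglyConnected (E \ {e})

/-- Edges of `E` induced on the vertex set `C`. -/
def restrictE (E : Set (V × V)) (C : Set V) : Set (V × V) :=
  {e ∈ E | e.1 ∈ C ∧ e.2 ∈ C}

def SCOn (E' : Set (V × V)) (C : Set V) : Prop :=
  ∀ u ∈ C, ∀ v ∈ C, Reaches E' u v

/-- `E'` is a 2-edge-connected (spanning sub)graph on the vertex set `C`. -/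
def Is2ECOn (E' : Set (V × V)) (C : Set V) : Prop :=
  SCOn E' C ∧ ∀ e ∈ E', SCOn (E' \ {e}) C

/-- A 2-edge-connected component: a maximal vertex set inducing a 2-edge-connected subgraph. -/
def Is2ECComponent (E : Set (V × V)) (C : Set V) : Prop :=
  Is2ECOn (restrictE E C) C ∧
    ∀ D : Set V, C ⊆ D → Is2ECOn (restrictE E D) D → D = C

/-- A solution to 2EC-B: a strongly connected spanning subgraph with the same
2-edge-connected blocks. -/
def IsSolutionB (E E' : Set (V × V)) : Prop :=
  E' ⊆ E ∧ StronglyConnected E' ∧ SameBlocks E' E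

/-- The reverse digraph. -/
def revE (E : Set (V × V)) : Set (V × V) := {e | (e.2, e.1) ∈ E}

/-- A bridge of the flow graph with start vertex `s`: an edge contained in every
walk from `s` to its head. -/
def IsBridge (E : Set (V × V)) (s : V) (e : V × V) : Prop :=
  e ∈ E ∧ ∀ p, IsWalk E s e.2 p → e ∈ p

/-- `u` is a vertex of the walk `p` starting at `s`. -/
def OnWalk (s : V) (p : List (V × V)) (u : V) : Prop :=
  u = s ∨ ∃ e ∈ p, e.2 = u

/-- `u` dominates `w` in the flow graph with start `s`. -/
def Dom (E : Set (V × V)) (s u w : V) : Prop :=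
  ∀ p, IsWalk E s w p → OnWalk s p u

def PDom (E : Set (V × V)) (s u w : V) : Prop := Dom E s u w ∧ u ≠ w

/-- `u` is the immediate dominator of `w`. -/
def Idom (E : Set (V × V)) (s u w : V) : Prop :=
  PDom E s u w ∧ ∀ x, PDom E s x w → Dom E s x u

/-- Marked vertices: roots of the trees of the canonical decomposition of the
dominator tree, i.e. `s` and the heads of bridges of `G(s)`. -/
def Marked (E : Set (V × V)) (s r : V) : Prop :=
  r = s ∨ ∃ e, IsBridge E s e ∧ e.2 = r

/-- `w` belongs to the tree `T(r)` of the canonical decomposition: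
`r` is the nearest marked dominator of `w`. -/
def InTree (E : Set (V × V)) (s r w : V) : Prop :=
  Marked E s r ∧ Dom E s r w ∧ ∀ x, Marked E s x → Dom E s x w → Dom E s x r

/-- A spanning tree of the flow graph `G(s)` rooted at `s`. -/
def IsSpanningTree (E : Set (V × V)) (s : V) (T : Set (V × V)) : Prop :=
  T ⊆ E ∧ (∀ v, Reaches T s v) ∧ (∀ v, v ≠ s → ∃! e, e ∈ T ∧ e.2 = v) ∧
    ∀ e ∈ T, e.2 ≠ s

/-- Two independent spanning trees: for every `v`, the two tree paths from `s`
to `v` share only dominators of `v`. -/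
def IndependentTrees (E : Set (V × V)) (s : V) (T₁ T₂ : Set (V × V)) : Prop :=
  IsSpanningTree E s T₁ ∧ IsSpanningTree E s T₂ ∧
    ∀ v p q, IsWalk T₁ s v p → IsWalk T₂ s v q →
      ∀ u, OnWalk s p u → OnWalk s q u → Dom E s u v

/-- The contraction map defining the first-level auxiliary graph `G_r`:
vertices of `T(r)` stay put, descendants of a marked child `x` of a boundary
vertex of `T(r)` are contracted into `x`, and non-descendants of `r` are
contracted into `d(r)`. -/
def ContractsTo (E : Set (V × V)) (s r v x : V) : Prop :=
  (InTree E s r v ∧ x = v) ∨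
  (Dom E s r v ∧ ¬ InTree E s r v ∧ Marked E s x ∧ Dom E s x v ∧
    ∃ u, InTree E s r u ∧ Idom E s u x) ∨
  (¬ Dom E s r v ∧ Idom E s x r)

/-- The edge set of the first-level auxiliary graph `G_r`. -/
def AuxE (E : Set (V × V)) (s r : V) : Set (V × V) :=
  {e | ∃ a b, (a, b) ∈ E ∧ ContractsTo E s r a e.1 ∧ ContractsTo E s r b e.2}

def cutEdges (E : Set (V × V)) (U W : Set V) : Set (V × V) :=
  {e ∈ E | e.1 ∈ U ∧ e.2 ∈ W}

def IsCut (u w : V) (U W : Set V) : Prop := u ∈ U ∧ w ∈ W ∧ Disjoint U W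

def IsMinCut (E : Set (V × V)) (u w : V) (U W : Set V) : Prop :=
  IsCut u w U W ∧ ∀ U' W' : Set V, IsCut u w U' W' →
    (cutEdges E U W).ncard ≤ (cutEdges E U' W').ncard

/-- There exist `k` pairwise edge-disjoint walks from `u` to `w`. -/
def HasEDP (E : Set (V × V)) (u w : V) (k : ℕ) : Prop :=
  ∃ P : Fin k → List (V × V), (∀ i, IsWalk E u w (P i)) ∧
    ∀ i j, i ≠ j → (P i).Disjoint (P j)

/-- The (loop-free, simple) quotient of the inter-component edges `F` under the
component map `h`. -/
def quotE {V' : Type*} (h : V → V') (F : Set (V × V)) : Set (V' × V') :=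
  {q | ∃ e ∈ F, h e.1 = q.1 ∧ h e.2 = q.2 ∧ q.1 ≠ q.2}

/-- A solution to 2EC-C: a strongly connected spanning subgraph with the same
2-edge-connected components. -/
def IsSolutionC (E E' : Set (V × V)) : Prop :=
  E' ⊆ E ∧ StronglyConnected E' ∧
    ∀ C : Set V, Is2ECComponent E C ↔ Is2ECComponent E' C

/-- One step of the deletion process: delete an edge `(x,y)` such that two
edge-disjoint `x → y` paths remain. -/
def DelStep (E₁ E₂ : Set (V × V)) : Prop :=
  ∃ x y : V, (x, y) ∈ E₁ ∧ E₂ = E₁ \ {(x, y)} ∧ TwoEDP E₂ x y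


/-!
Deleting `(x, y)` cannot destroy a pair of edge-disjoint `a → b` paths: by Menger's theorem
for two paths, it suffices that `a` still reaches `b` after deleting any further edge `e`. A
walk from `a` to `b` avoiding `e` exists in `E`, and each use of `(x, y)` on it can be replaced
by whichever of the two edge-disjoint `x → y` paths of `E \ {(x, y)}` avoids `e`.

Menger's theorem for two paths is proved by one augmentation step. Given a path `p`, either
`w` is reachable from `u` in the residual graph of `p`, and cancelling the antiparallel edges of
`p` and an augmenting path leaves an edge set with net out-flow `2` at `u` which splits into two
edge-disjoint walks; or the set `R` of vertices reachable in the residual graph is left by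
exactly one edge of `p` and by no other edge of `E`, so that edge separates `u` from `w`.
-/

section

variable {E F : Set (V × V)} {a b c u w : V} {p q : List (V × V)}

namespace IsWalk

lemma mem_of_mem (h : IsWalk E a b p) : ∀ e ∈ p, e ∈ E := by
  induction h with
  | nil => simp
  | cons he _ ih => simpa [he] using ih

lemma of_forall_mem (h : IsWalk E a b p) (hF : ∀ e ∈ p, e ∈ F) : IsWalk F a b p := by
  induction h with
  | nil u => exact .nil u
  | cons _ _ ih =>
    exact .cons (hF _ List.mem_cons_self) (ih fun e he => hF e (List.mem_cons_of_mem _ he))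

lemma mono (hEF : E ⊆ F) (h : IsWalk E a b p) : IsWalk F a b p :=
  h.of_forall_mem fun e he => hEF (h.mem_of_mem e he)

lemma append (h : IsWalk E a b p) (h' : IsWalk E b c q) : IsWalk E a c (p ++ q) := by
  induction h with
  | nil => exact h'
  | cons he _ ih => exact .cons he (ih h')

lemma of_append (h : IsWalk E a c (p ++ q)) : ∃ b, IsWalk E a b p ∧ IsWalk E b c q := by
  induction p generalizing a with
  | nil => exact ⟨a, .nil a, h⟩
  | cons e p ih =>
    cases h with
    | cons he hp =>
      obtain ⟨b, h₁, h₂⟩ := ih hp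
      exact ⟨b, .cons he h₁, h₂⟩

lemma exists_nodup_subset (h : IsWalk E a b p) :
    ∃ p', IsWalk E a b p' ∧ p'.Nodup ∧ p' ⊆ p := by
  induction h with
  | nil u => exact ⟨[], .nil u, List.nodup_nil, List.nil_subset _⟩
  | @cons u v w p he _ ih =>
    obtain ⟨p', hw, hnd, hsub⟩ := ih
    by_cases hmem : (u, v) ∈ p'
    · obtain ⟨s, t, rfl⟩ := List.append_of_mem hmem
      obtain ⟨_, -, hvt⟩ := hw.of_append
      cases hvt with
      | cons _ ht =>
        refine ⟨(u, v) :: t, .cons he ht, (List.nodup_append.1 hnd).2.1, ?_⟩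
        exact List.cons_subset_cons _ fun e he => hsub (by simp [he])
    · exact ⟨(u, v) :: p', .cons he hw, List.nodup_cons.2 ⟨hmem, hnd⟩,
        List.cons_subset_cons _ hsub⟩

lemma reaches_of_forall_mem_or_reaches (h : IsWalk E a b p)
    (hF : ∀ e ∈ p, e ∈ F ∨ Reaches F e.1 e.2) : Reaches F a b := by
  induction h with
  | nil u => exact ⟨[], .nil u⟩
  | @cons u v w p _ _ ih =>
    obtain ⟨r, hr⟩ := ih fun e he => hF e (List.mem_cons_of_mem _ he)
    rcases hF (u, v) List.mem_cons_self with huv | ⟨s, hs⟩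
    · exact ⟨(u, v) :: r, .cons huv hr⟩
    · exact ⟨s ++ r, hs.append hr⟩

lemma exists_exit {R : Set V} (h : IsWalk E a b p) (ha : a ∈ R) (hb : b ∉ R) :
    ∃ e ∈ p, e.1 ∈ R ∧ e.2 ∉ R := by
  induction h with
  | nil => exact absurd ha hb
  | @cons u v w p _ _ ih =>
    by_cases hv : v ∈ R
    · obtain ⟨e, he, h₁, h₂⟩ := ih hv hb
      exact ⟨e, List.mem_cons_of_mem _ he, h₁, h₂⟩
    · exact ⟨(u, v), List.mem_cons_self, ha, hv⟩

lemma forall_fst_notMem {R : Set V} (h : IsWalk E a b p) (ha : a ∉ R)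
    (hR : ∀ e ∈ p, e.2 ∈ R → e.1 ∈ R) : ∀ e ∈ p, e.1 ∉ R := by
  induction h with
  | nil => simp
  | @cons u v w p _ _ ih =>
    have hv : v ∉ R := fun hv => ha (hR (u, v) List.mem_cons_self hv)
    simpa [ha] using ih hv fun e he => hR e (List.mem_cons_of_mem _ he)

lemma exists_unique_exit {R : Set V} (h : IsWalk E a b p) (ha : a ∈ R) (hb : b ∉ R)
    (hR : ∀ e ∈ p, e.2 ∈ R → e.1 ∈ R) :
    ∃ e₀, ∀ e ∈ p, e.1 ∈ R → e.2 ∉ R → e = e₀ := by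
  induction h with
  | nil => exact absurd ha hb
  | @cons u v w p _ hp ih =>
    have hR' : ∀ e ∈ p, e.2 ∈ R → e.1 ∈ R := fun e he => hR e (List.mem_cons_of_mem _ he)
    by_cases hv : v ∈ R
    · obtain ⟨e₀, he₀⟩ := ih hv hb hR'
      refine ⟨e₀, fun e he h₁ h₂ => ?_⟩
      rcases List.mem_cons.1 he with rfl | he
      · exact absurd hv h₂
      · exact he₀ e he h₁ h₂
    · refine ⟨(u, v), fun e he h₁ _ => ?_⟩
      rcases List.mem_cons.1 he with rfl | he
      · rfl
      · exact absurd h₁ (hp.forall_fst_notMem hv hR' e he)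

end IsWalk

lemma TwoEDP.reaches_sdiff (h : TwoEDP E a b) (e : V × V) : Reaches (E \ {e}) a b := by
  obtain ⟨p, q, hp, hq, hpq⟩ := h
  have avoid : ∀ {r}, IsWalk E a b r → e ∉ r → Reaches (E \ {e}) a b := fun hr he =>
    ⟨_, hr.of_forall_mem fun f hf => ⟨hr.mem_of_mem f hf, fun hfe => he (hfe ▸ hf)⟩⟩
  by_cases hep : e ∈ p
  · exact avoid hq fun heq => hpq hep heq
  · exact avoid hp hep

section Flow

variable [DecidableEq V]

def netOut (l : List (V × V)) (v : V) : ℤ :=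
  (l.countP fun e => e.1 = v : ℤ) - (l.countP fun e => e.2 = v : ℤ)

lemma netOut_cons (e : V × V) (l : List (V × V)) (v : V) :
    netOut (e :: l) v = netOut l v + (if e.1 = v then 1 else 0) - (if e.2 = v then 1 else 0) := by
  simp only [netOut, List.countP_cons]
  by_cases h₁ : e.1 = v <;> by_cases h₂ : e.2 = v <;> simp [h₁, h₂] <;> ring

lemma netOut_append (l₁ l₂ : List (V × V)) (v : V) :
    netOut (l₁ ++ l₂) v = netOut l₁ v + netOut l₂ v := by
  simp only [netOut, List.countP_append]
  push_cast
  ring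

lemma List.Perm.netOut_eq {l₁ l₂ : List (V × V)} (h : l₁.Perm l₂) (v : V) :
    netOut l₁ v = netOut l₂ v := by
  simp [netOut, h.countP_eq]

lemma netOut_map_swap (l : List (V × V)) (v : V) : netOut (l.map Prod.swap) v = -netOut l v := by
  simp only [netOut, List.countP_map]
  simp only [Function.comp_def, Prod.fst_swap, Prod.snd_swap]
  ring

lemma netOut_filter_add_filter_not (l : List (V × V)) (P : V × V → Bool) (v : V) :
    netOut (l.filter P) v + netOut (l.filter fun e => !P e) v = netOut l v := by
  rw [← netOut_append]
  exact (List.filter_append_perm P l).netOut_eq v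

lemma netOut_filter_swap_mem (hp : p.Nodup) (hq : q.Nodup) (v : V) :
    netOut (q.filter fun e => e.swap ∈ p) v = -netOut (p.filter fun e => e.swap ∈ q) v := by
  rw [← netOut_map_swap]
  refine List.Perm.netOut_eq ?_ v
  refine (List.perm_ext_iff_of_nodup (hq.filter _)
    ((hp.filter _).map Prod.swap_injective)).2 fun e => ?_
  simp only [List.mem_filter, List.mem_map, decide_eq_true_eq]
  constructor
  · rintro ⟨heq, hep⟩
    exact ⟨e.swap, ⟨hep, by simpa using heq⟩, e.swap_swap⟩
  · rintro ⟨f, ⟨hfp, hfq⟩, rfl⟩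
    exact ⟨hfq, by simpa using hfp⟩

lemma IsWalk.netOut_eq (h : IsWalk E a b p) (v : V) :
    netOut p v = (if a = v then 1 else 0) - (if b = v then 1 else 0) := by
  induction h with
  | nil => simp [netOut]
  | cons _ _ ih => rw [netOut_cons, ih]; ring

/-- Greedy path extraction: leave `u` along an edge of `l`, remove it, and continue from its head
until a vertex of negative net out-flow is reached. -/
theorem exists_walk_to_netOut_neg (l : List (V × V)) (u : V) (hu : 0 < netOut l u) :
    ∃ t p r, l.Perm (p ++ r) ∧ IsWalk {e | e ∈ l} u t p ∧ netOut l t < 0 := by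
  have hout : 0 < l.countP fun e => e.1 = u := by unfold netOut at hu; omega
  obtain ⟨⟨u', v⟩, huv, hu'⟩ := List.countP_pos_iff.1 hout
  obtain rfl : u = u' := (by simpa using hu' : u' = u).symm
  have hperm := List.perm_cons_erase huv
  set l' := l.erase (u, v)
  have hnet (z : V) : netOut l z =
      netOut l' z + (if u = z then 1 else 0) - (if v = z then 1 else 0) :=
    (hperm.netOut_eq z).trans (netOut_cons _ _ z)
  by_cases hv : netOut l v < 0
  · exact ⟨v, [(u, v)], l', hperm, .cons huv (.nil v), hv⟩
  have hv' : 0 < netOut l' v := by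
    rcases eq_or_ne u v with rfl | huv'
    · simpa [hnet u] using hu
    · have := hnet v
      simp only [huv', if_false, if_true] at this
      omega
  have : l'.length < l.length := by
    rw [List.length_erase_of_mem huv]
    exact Nat.sub_lt (List.length_pos_of_mem huv) one_pos
  obtain ⟨t, p, r, hperm', hwalk, ht⟩ := exists_walk_to_netOut_neg l' v hv'
  refine ⟨t, (u, v) :: p, r, hperm.trans (hperm'.cons _),
    .cons huv (hwalk.mono fun e he => List.mem_of_mem_erase he), ?_⟩
  have htv : v ≠ t := by rintro rfl; omega
  have htu : u ≠ t := by
    rintro rfl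
    have := hnet u
    simp only [htv, if_false, if_true] at this
    omega
  simpa [hnet t, htu, htv] using ht
termination_by l.length

lemma eq_of_sub_ite_neg {t : V}
    (h : (if u = t then 1 else 0) - (if w = t then 1 else 0) < (0 : ℤ)) : w = t := by
  by_contra hwt
  rw [if_neg hwt] at h
  split_ifs at h <;> linarith

lemma twoEDP_of_netOut_eq {l : List (V × V)} (hnd : l.Nodup) (hlE : ∀ e ∈ l, e ∈ E)
    (hflow : ∀ v, netOut l v = 2 * ((if u = v then 1 else 0) - (if w = v then 1 else 0))) :
    TwoEDP E u w := by
  by_cases huw : u = w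
  · subst huw
    exact ⟨[], [], .nil u, .nil u, List.disjoint_nil_left _⟩
  obtain ⟨t, p, r, hperm, hp, ht⟩ :=
    exists_walk_to_netOut_neg l u (by simp [hflow, Ne.symm huw])
  obtain rfl := eq_of_sub_ite_neg (neg_of_mul_neg_right (hflow t ▸ ht) zero_le_two)
  have hr (v : V) : netOut r v = ((if u = v then 1 else 0) - (if w = v then 1 else 0)) := by
    have := (hperm.netOut_eq v).trans (netOut_append p r v)
    rw [hflow, hp.netOut_eq] at this
    linarith
  obtain ⟨t', q, -, -, hq, ht'⟩ := exists_walk_to_netOut_neg r u (by simp [hr, Ne.symm huw])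
  obtain rfl := eq_of_sub_ite_neg (hr t' ▸ ht')
  have hrl : ∀ e ∈ r, e ∈ l := fun e he => hperm.mem_iff.2 (List.mem_append_right _ he)
  refine ⟨p, q, hp.of_forall_mem fun e he => hlE e (hp.mem_of_mem e he),
    hq.of_forall_mem fun e he => hlE e (hrl e (hq.mem_of_mem e he)), ?_⟩
  exact fun e hep heq => List.disjoint_of_nodup_append (hperm.nodup hnd) hep (hq.mem_of_mem e heq)

/-- The residual graph of the unit flow along `p`. -/
def residualE (E : Set (V × V)) (p : List (V × V)) : Set (V × V) :=
  (E \ {e | e ∈ p}) ∪ {e | e.swap ∈ p}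

lemma twoEDP_of_reaches_residualE (hp : IsWalk E u w p) (hpnd : p.Nodup)
    (hres : Reaches (residualE E p) u w) : TwoEDP E u w := by
  obtain ⟨q, hq, hqnd, -⟩ := hres.choose_spec.exists_nodup_subset
  have hfresh (e) (he : e ∈ q.filter fun e => e.swap ∉ p) : e ∈ E ∧ e ∉ p := by
    obtain ⟨heq, hswap⟩ := List.mem_filter.1 he
    rcases hq.mem_of_mem e heq with h | h
    · exact h
    · exact absurd h (by simpa using hswap)
  refine twoEDP_of_netOut_eq
    (l := p.filter (fun e => e.swap ∉ q) ++ q.filter (fun e => e.swap ∉ p)) ?_ ?_ fun v => ?_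
  · refine List.nodup_append.2 ⟨hpnd.filter _, hqnd.filter _, ?_⟩
    rintro e he₁ _ he₂ rfl
    exact (hfresh e he₂).2 (List.mem_of_mem_filter he₁)
  · intro e he
    rcases List.mem_append.1 he with he | he
    · exact hp.mem_of_mem e (List.mem_of_mem_filter he)
    · exact (hfresh e he).1
  · have hp' := netOut_filter_add_filter_not p (fun e => e.swap ∈ q) v
    have hq' := netOut_filter_add_filter_not q (fun e => e.swap ∈ p) v
    have hcancel := netOut_filter_swap_mem hpnd hqnd v
    simp only [decide_not] at hp' hq' hcancel ⊢
    rw [netOut_append]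
    linarith [hp.netOut_eq v, hq.netOut_eq v]

lemma exists_not_reaches_sdiff (hp : IsWalk E u w p) (hres : ¬ Reaches (residualE E p) u w) :
    ∃ e, ¬ Reaches (E \ {e}) u w := by
  set R := {v | Reaches (residualE E p) u v}
  have hclosed (e) (he : e ∈ residualE E p) (h₁ : e.1 ∈ R) : e.2 ∈ R :=
    let ⟨r, hr⟩ := h₁
    ⟨r ++ [e], hr.append (.cons he (.nil _))⟩
  have hu : u ∈ R := ⟨[], .nil u⟩
  obtain ⟨e₀, he₀⟩ := hp.exists_unique_exit hu hres fun e he h₂ =>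
    hclosed e.swap (Or.inr (by simpa using he)) h₂
  refine ⟨e₀, fun ⟨r, hr⟩ => ?_⟩
  obtain ⟨e, her, h₁, h₂⟩ := hr.exists_exit hu hres
  obtain ⟨heE, hne⟩ := hr.mem_of_mem e her
  by_cases hep : e ∈ p
  · exact hne (he₀ e hep h₁ h₂)
  · exact h₂ (hclosed e (Or.inl ⟨heE, hep⟩) h₁)

end Flow

theorem twoEDP_iff_forall_reaches_sdiff : TwoEDP E u w ↔ ∀ e, Reaches (E \ {e}) u w := by
  classical
  refine ⟨TwoEDP.reaches_sdiff, fun H => ?_⟩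
  obtain ⟨p, hp, hpnd, -⟩ := ((H (u, u)).choose_spec.mono Set.sdiff_subset).exists_nodup_subset
  by_cases hres : Reaches (residualE E p) u w
  · exact twoEDP_of_reaches_residualE hp hpnd hres
  · obtain ⟨e, he⟩ := exists_not_reaches_sdiff hp hres
    exact absurd (H e) he

lemma twoEDP_sdiff_of_twoEDP {x y : V} (hxy : TwoEDP (E \ {(x, y)}) x y)
    (hab : TwoEDP E a b) : TwoEDP (E \ {(x, y)}) a b := by
  refine twoEDP_iff_forall_reaches_sdiff.2 fun e => ?_
  obtain ⟨r, hr⟩ := hab.reaches_sdiff e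
  refine hr.reaches_of_forall_mem_or_reaches fun f hf => ?_
  obtain ⟨hfE, hfe⟩ := hr.mem_of_mem f hf
  by_cases hfxy : f = (x, y)
  · subst hfxy
    exact .inr (hxy.reaches_sdiff e)
  · exact .inl ⟨⟨hfE, hfxy⟩, hfe⟩

end

theorem stmt0_general (E : Set (V × V)) (x y : V)
    (h2 : TwoEDP (E \ {(x, y)}) x y) :
    ∀ u w : V, TwoEC E u w → TwoEC (E \ {(x, y)}) u w :=
  fun _ _ ⟨huw, hwu⟩ => ⟨twoEDP_sdiff_of_twoEDP h2 huw, twoEDP_sdiff_of_twoEDP h2 hwu⟩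

theorem stmt0 (E : Set (V × V)) (x y : V)
    (hSC : StronglyConnected E) (hxy : (x, y) ∈ E)
    (h2 : TwoEDP (E \ {(x, y)}) x y) :
    ∀ u w : V, TwoEC E u w → TwoEC (E \ {(x, y)}) u w :=
  stmt0_general E x y h2
end

section
/- Let G be a 2-edge-connected digraph (no strong bridges) and s a vertex. Then the flow graph G(s) has two edge-disjoint spanning trees rooted at s, and the reverse flow graph G^R(s) has two edge-disjoint spanning trees rooted at s; the union of these four trees is a 2-edge-connected spanning subgraph of G with at most 4(n−1) edges, giving a 2-approximation of the smallest 2-edge-connected spanning subgraph. -/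
variable {V : Type*}

/-!
In a 2-edge-connected digraph every vertex set avoiding `s` is entered by at least two edges, so by
Edmonds' branching theorem (in Lovász's proof) `G(s)` contains two edge-disjoint spanning
arborescences, and so does the reverse graph. Deleting one edge spares one out-tree and one in-tree
of `s`, so the union of the four trees stays 2-edge-connected. Each tree has `n - 1` edges, while a
2-edge-connected spanning subgraph has in-degree at least 2 at every vertex, hence at least `2n`
edges.
-/

open Set

theorem IsWalk.mono_s11 {E E' : Set (V × V)} (h : E ⊆ E') {u v : V} {p : List (V × V)}
    (hw : IsWalk E u v p) : IsWalk E' u v p := by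
  induction hw with
  | nil u => exact .nil u
  | cons he _ ih => exact .cons (h he) ih

theorem IsWalk.append_s11 {E : Set (V × V)} {u v w : V} {p q : List (V × V)}
    (hp : IsWalk E u v p) (hq : IsWalk E v w q) : IsWalk E u w (p ++ q) := by
  induction hp with
  | nil u => exact hq
  | cons he _ ih => exact .cons he (ih hq)

theorem Reaches.refl (E : Set (V × V)) (u : V) : Reaches E u u := ⟨[], .nil u⟩

theorem Reaches.mono_s11 {E E' : Set (V × V)} (h : E ⊆ E') {u v : V} (hr : Reaches E u v) :
    Reaches E' u v :=
  let ⟨p, hp⟩ := hr; ⟨p, hp.mono_s11 h⟩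

theorem Reaches.trans {E : Set (V × V)} {u v w : V} (huv : Reaches E u v)
    (hvw : Reaches E v w) : Reaches E u w :=
  let ⟨p, hp⟩ := huv; let ⟨q, hq⟩ := hvw; ⟨p ++ q, hp.append_s11 hq⟩

theorem Reaches.snoc {E : Set (V × V)} {u v w : V} (h : Reaches E u v) (he : (v, w) ∈ E) :
    Reaches E u w :=
  h.trans ⟨[(v, w)], .cons he (.nil w)⟩

theorem Reaches.rev {E : Set (V × V)} {u v : V} (h : Reaches E u v) : Reaches (revE E) v u := by
  obtain ⟨p, hp⟩ := h
  induction hp with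
  | nil u => exact .refl _ u
  | cons he _ ih => exact ih.snoc he

theorem revE_eq_image_swap (E : Set (V × V)) : revE E = Prod.swap '' E := by
  rw [image_swap_eq_preimage_swap]
  rfl

theorem revE_sdiff_singleton (E : Set (V × V)) (e : V × V) :
    revE E \ {e} = revE (E \ {e.swap}) := by
  ext f
  simp only [revE, mem_sdiff, mem_ofPred_eq, mem_singleton_iff, Prod.ext_iff, Prod.fst_swap,
    Prod.snd_swap]
  tauto

theorem Is2ECGraph.revE {E : Set (V × V)} (hG : Is2ECGraph E) : Is2ECGraph (revE E) :=
  ⟨fun u v => (hG.1 v u).rev, fun e he u v => by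
    rw [revE_sdiff_singleton]
    exact (hG.2 e.swap he v u).rev⟩

theorem reaches_union_sdiff_singleton {A B : Set (V × V)} (hAB : Disjoint A B) {x y : V}
    (hA : Reaches A x y) (hB : Reaches B x y) (e : V × V) : Reaches ((A ∪ B) \ {e}) x y := by
  by_cases heA : e ∈ A
  · refine hB.mono_s11 (show B ⊆ (A ∪ B) \ {e} from fun f hf => ⟨.inr hf, ?_⟩)
    rintro rfl
    exact disjoint_left.1 hAB heA hf
  · refine hA.mono_s11 (show A ⊆ (A ∪ B) \ {e} from fun f hf => ⟨.inl hf, ?_⟩)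
    rintro rfl
    exact heA hf

theorem is2ECGraph_union {A B C D : Set (V × V)} {s : V} (hAB : Disjoint A B)
    (hCD : Disjoint C D) (hA : ∀ v, Reaches A s v) (hB : ∀ v, Reaches B s v)
    (hC : ∀ v, Reaches C v s) (hD : ∀ v, Reaches D v s) : Is2ECGraph (A ∪ B ∪ (C ∪ D)) := by
  refine ⟨fun u v => ((hC u).mono_s11 ?_).trans ((hA v).mono_s11 ?_), fun e _ u v => ?_⟩
  · exact subset_union_left.trans subset_union_right
  · exact subset_union_left.trans subset_union_left
  · have hin := (reaches_union_sdiff_singleton hCD (hC u) (hD u) e).mono_s11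
      (sdiff_subset_sdiff_left (subset_union_right (s := A ∪ B)))
    have hout := (reaches_union_sdiff_singleton hAB (hA v) (hB v) e).mono_s11
      (sdiff_subset_sdiff_left (subset_union_left (t := C ∪ D)))
    exact hin.trans hout

def enteringEdges (E : Set (V × V)) (A : Set V) : Set (V × V) := {e ∈ E | e.1 ∉ A ∧ e.2 ∈ A}

theorem Reaches.enteringEdges_nonempty {E : Set (V × V)} {A : Set V} {u v : V}
    (h : Reaches E u v) (hu : u ∉ A) (hv : v ∈ A) : (enteringEdges E A).Nonempty := by
  obtain ⟨p, hp⟩ := h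
  induction hp with
  | nil u => exact absurd hv hu
  | @cons a b c q he _ ih =>
    by_cases hb : b ∈ A
    · exact ⟨(a, b), he, hu, hb⟩
    · exact ih hb hv

theorem reaches_of_forall_enteringEdges_nonempty {E : Set (V × V)} {s : V}
    (h : ∀ A : Set V, s ∉ A → A.Nonempty → (enteringEdges E A).Nonempty) (v : V) :
    Reaches E s v := by
  by_contra hv
  obtain ⟨e, he, hreach, hnot⟩ := h {w | ¬ Reaches E s w} (not_not.2 (.refl E s)) ⟨v, hv⟩
  exact hnot ((not_not.1 hreach).snoc he)

theorem enteringEdges_sdiff_singleton (E : Set (V × V)) (e : V × V) (A : Set V) :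
    enteringEdges (E \ {e}) A = enteringEdges E A \ {e} := by
  ext f
  simp only [enteringEdges, mem_sdiff, mem_ofPred_eq]
  tauto

theorem ncard_enteringEdges_union_add_inter_le [Finite V] (E : Set (V × V)) (A B : Set V) :
    (enteringEdges E (A ∪ B)).ncard + (enteringEdges E (A ∩ B)).ncard ≤
      (enteringEdges E A).ncard + (enteringEdges E B).ncard := by
  rw [← ncard_union_add_ncard_inter (enteringEdges E (A ∪ B)),
    ← ncard_union_add_ncard_inter (enteringEdges E A)]
  refine add_le_add (ncard_le_ncard ?_) (ncard_le_ncard ?_)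
  · rintro e (⟨he, h1, h2A | h2B⟩ | ⟨he, h1, h2A, h2B⟩)
    · exact .inl ⟨he, fun h => h1 (.inl h), h2A⟩
    · exact .inr ⟨he, fun h => h1 (.inr h), h2B⟩
    · by_cases h1A : e.1 ∈ A
      · exact .inr ⟨he, fun h1B => h1 ⟨h1A, h1B⟩, h2B⟩
      · exact .inl ⟨he, h1A, h2A⟩
  · rintro e ⟨⟨he, h1, -⟩, -, -, h2A, h2B⟩
    exact ⟨⟨he, fun h => h1 (.inl h), h2A⟩, he, fun h => h1 (.inr h), h2B⟩

theorem Is2ECGraph.two_le_ncard_enteringEdges [Finite V] {E : Set (V × V)} (hG : Is2ECGraph E)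
    {A : Set V} {u v : V} (hu : u ∉ A) (hv : v ∈ A) : 2 ≤ (enteringEdges E A).ncard := by
  obtain ⟨e₁, he₁⟩ := (hG.1 u v).enteringEdges_nonempty hu hv
  obtain ⟨e₂, he₂⟩ := (hG.2 e₁ he₁.1 u v).enteringEdges_nonempty hu hv
  rw [enteringEdges_sdiff_singleton] at he₂
  exact (one_lt_ncard_iff (toFinite _)).2 ⟨e₁, e₂, he₁, he₂.1, Ne.symm he₂.2⟩

theorem forall_reaches_sdiff_singleton [Finite V] {D : Set (V × V)} {s : V} {e : V × V}
    (hD : ∀ v, Reaches D s v)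
    (he : ∀ A : Set V, s ∉ A → e ∈ enteringEdges D A → 2 ≤ (enteringEdges D A).ncard) (v : V) :
    Reaches (D \ {e}) s v := by
  refine reaches_of_forall_enteringEdges_nonempty (fun A hs ⟨w, hw⟩ => ?_) v
  rw [enteringEdges_sdiff_singleton]
  by_cases heA : e ∈ enteringEdges D A
  · have := he A hs heA
    exact nonempty_of_ncard_ne_zero (by rw [ncard_sdiff_singleton_of_mem heA]; omega)
  · rw [sdiff_singleton_eq_self heA]
    exact (hD w).enteringEdges_nonempty hs hw

/-- Lovász's step in Edmonds' branching theorem. Call `A ∌ s` tight if it meets `Sᶜ` and at most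
one edge enters it. If tight sets exist, take an inclusion-minimal one `B`; since `B \ S` is
entered twice, some edge enters `B \ S` from `B ∩ S`, and by submodularity of in-degrees any tight
set entered by that edge would cut `B` to a smaller tight set. -/
theorem exists_edge_forall_reaches_sdiff [Finite V] {D : Set (V × V)} {s : V} {S : Set V}
    (hsS : s ∈ S) (hD : ∀ v, Reaches D s v)
    (h2 : ∀ A ⊆ Sᶜ, A.Nonempty → 2 ≤ (enteringEdges D A).ncard) (hS : S ≠ univ) :
    ∃ e ∈ D, e.1 ∈ S ∧ e.2 ∉ S ∧ ∀ v, Reaches (D \ {e}) s v := by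
  set tight : Set (Set V) := {A | s ∉ A ∧ (A \ S).Nonempty ∧ (enteringEdges D A).ncard ≤ 1}
  have htight : ∀ e ∈ D, e.2 ∉ S → (∀ A ∈ tight, e ∉ enteringEdges D A) →
      ∀ v, Reaches (D \ {e}) s v := by
    refine fun e _ _ hnot => forall_reaches_sdiff_singleton hD fun A hsA heA => ?_
    by_contra! hlt
    exact hnot A ⟨hsA, ⟨e.2, heA.2.2, ‹e.2 ∉ S›⟩, by omega⟩ heA
  rcases tight.eq_empty_or_nonempty with hempty | hne
  · obtain ⟨v, hv⟩ := (ne_univ_iff_exists_notMem S).1 hS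
    obtain ⟨e, heD, he1, he2⟩ := (hD v).enteringEdges_nonempty (A := Sᶜ) (not_not.2 hsS) hv
    refine ⟨e, heD, not_not.1 he1, he2, htight e heD he2 fun A hA _ => ?_⟩
    simp [hempty] at hA
  obtain ⟨B, ⟨hsB, hBS, hB1⟩, hBmin⟩ := (toFinite tight).exists_minimal hne
  have hin : ¬ enteringEdges D (B \ S) ⊆ enteringEdges D B := fun hsub => by
    have := (ncard_le_ncard hsub).trans hB1
    have := h2 (B \ S) (fun _ hx => hx.2) hBS
    omega
  obtain ⟨e, ⟨heD, he1, he2B, he2S⟩, heB⟩ := not_subset.1 hin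
  have he1B : e.1 ∈ B := by_contra fun h => heB ⟨heD, h, he2B⟩
  have he1S : e.1 ∈ S := by_contra fun h => he1 ⟨he1B, h⟩
  refine ⟨e, heD, he1S, he2S, htight e heD he2S fun A ⟨hsA, _, hA1⟩ heA => ?_⟩
  have hunion : 0 < (enteringEdges D (A ∪ B)).ncard :=
    (ncard_pos (toFinite _)).2 ((hD e.2).enteringEdges_nonempty (by simp [hsA, hsB]) (.inr he2B))
  have := ncard_enteringEdges_union_add_inter_le D A B
  have hAB : A ∩ B ∈ tight := ⟨fun h => hsA h.1, ⟨e.2, ⟨heA.2.2, he2B⟩, he2S⟩, by omega⟩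
  exact heA.2.1 (hBmin hAB inter_subset_right he1B).1

structure IsArborescenceOn (E : Set (V × V)) (s : V) (F : Set (V × V)) (S : Set V) : Prop where
  root_mem : s ∈ S
  subset : F ⊆ E
  head_mem : ∀ e ∈ F, e.2 ∈ S
  head_ne_root : ∀ e ∈ F, e.2 ≠ s
  existsUnique_head : ∀ v ∈ S, v ≠ s → ∃! e, e ∈ F ∧ e.2 = v
  reaches : ∀ v ∈ S, Reaches F s v

theorem isArborescenceOn_root (E : Set (V × V)) (s : V) : IsArborescenceOn E s ∅ {s} where
  root_mem := rfl
  subset := empty_subset E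
  head_mem := by simp
  head_ne_root := by simp
  existsUnique_head v hv hvs := absurd hv hvs
  reaches v hv := hv ▸ .refl ∅ s

theorem IsArborescenceOn.insert {E F : Set (V × V)} {s : V} {S : Set V} {a b : V}
    (h : IsArborescenceOn E s F S) (hab : (a, b) ∈ E) (ha : a ∈ S) (hb : b ∉ S) :
    IsArborescenceOn E s (insert (a, b) F) (insert b S) where
  root_mem := .inr h.root_mem
  subset := insert_subset hab h.subset
  head_mem := by
    rintro e (rfl | he)
    exacts [.inl rfl, .inr (h.head_mem e he)]
  head_ne_root := by
    rintro e (rfl | he)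
    exacts [fun (hbs : b = s) => hb (hbs ▸ h.root_mem), h.head_ne_root e he]
  existsUnique_head := by
    rintro v (rfl | hv) hvs
    · refine ⟨(a, v), ⟨.inl rfl, rfl⟩, ?_⟩
      rintro e ⟨rfl | he, hev⟩
      exacts [rfl, absurd (hev ▸ h.head_mem e he) hb]
    · obtain ⟨e, ⟨he, rfl⟩, huniq⟩ := h.existsUnique_head _ hv hvs
      refine ⟨e, ⟨.inr he, rfl⟩, ?_⟩
      rintro f ⟨rfl | hf, hfe⟩
      · obtain rfl : b = e.2 := hfe
        exact absurd hv hb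
      · exact huniq f ⟨hf, hfe⟩
  reaches := by
    rintro v (rfl | hv)
    · exact ((h.reaches a ha).mono_s11 (subset_insert _ _)).snoc (.inl rfl)
    · exact (h.reaches v hv).mono_s11 (subset_insert _ _)

theorem IsArborescenceOn.isSpanningTree {E T : Set (V × V)} {s : V}
    (h : IsArborescenceOn E s T univ) : IsSpanningTree E s T :=
  ⟨h.subset, fun v => h.reaches v trivial, fun v => h.existsUnique_head v trivial, h.head_ne_root⟩

theorem IsSpanningTree.mono_s11 {E E' T : Set (V × V)} {s : V} (h : IsSpanningTree E s T)
    (hE : E ⊆ E') : IsSpanningTree E' s T :=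
  ⟨h.1.trans hE, h.2⟩

theorem exists_isSpanningTree_of_extend [Finite V] {E : Set (V × V)} {s : V}
    (P : Set (V × V) → Prop) (h₀ : P ∅)
    (hstep : ∀ F S, IsArborescenceOn E s F S → P F → S ≠ univ →
      ∃ a ∈ S, ∃ b ∉ S, (a, b) ∈ E ∧ P (insert (a, b) F)) :
    ∃ T, IsSpanningTree E s T ∧ P T := by
  suffices key : ∀ k F S, Sᶜ.ncard = k → IsArborescenceOn E s F S → P F →
      ∃ T, IsSpanningTree E s T ∧ P T from
    key _ ∅ {s} rfl (isArborescenceOn_root E s) h₀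
  intro k
  induction k with
  | zero =>
    intro F S hk hF hP
    obtain rfl : S = univ := compl_empty_iff.1 ((ncard_eq_zero (toFinite _)).1 hk)
    exact ⟨F, hF.isSpanningTree, hP⟩
  | succ k ih =>
    intro F S hk hF hP
    obtain ⟨a, ha, b, hb, hab, hP'⟩ := hstep F S hF hP (by rintro rfl; simp at hk)
    refine ih _ _ ?_ (hF.insert hab ha hb) hP'
    have hcompl : (insert b S)ᶜ = Sᶜ \ {b} := by ext; simp [not_or, and_comm]
    rw [hcompl, ncard_sdiff_singleton_of_mem hb, hk, Nat.add_sub_cancel]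

theorem exists_isSpanningTree [Finite V] {E : Set (V × V)} {s : V} (h : ∀ v, Reaches E s v) :
    ∃ T, IsSpanningTree E s T := by
  obtain ⟨T, hT, -⟩ := exists_isSpanningTree_of_extend (E := E) (s := s) (fun _ => True) trivial
    fun F S hF _ hS => by
      obtain ⟨v, hv⟩ := (ne_univ_iff_exists_notMem S).1 hS
      obtain ⟨e, he, he1, he2⟩ := (h v).enteringEdges_nonempty (A := Sᶜ) (not_not.2 hF.root_mem) hv
      exact ⟨e.1, not_not.1 he1, e.2, he2, he, trivial⟩
  exact ⟨T, hT⟩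

/-- Edmonds' branching theorem for two branchings. The first tree is grown so that every vertex
stays reachable from `s` outside it; a spanning tree of the remaining edges is the second. -/
theorem exists_disjoint_isSpanningTree [Finite V] {E : Set (V × V)} {s : V}
    (h2 : ∀ A : Set V, s ∉ A → A.Nonempty → 2 ≤ (enteringEdges E A).ncard) :
    ∃ T₁ T₂, IsSpanningTree E s T₁ ∧ IsSpanningTree E s T₂ ∧ Disjoint T₁ T₂ := by
  have hreach : ∀ v, Reaches (E \ ∅) s v := by
    rw [sdiff_empty]
    exact reaches_of_forall_enteringEdges_nonempty fun A hs hA =>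
      nonempty_of_ncard_ne_zero (by have := h2 A hs hA; omega)
  obtain ⟨T₁, hT₁, hrest⟩ := exists_isSpanningTree_of_extend (E := E) (s := s)
    (fun F => ∀ v, Reaches (E \ F) s v) hreach fun F S hF hP hS => by
      have hcut : ∀ A ⊆ Sᶜ, A.Nonempty → 2 ≤ (enteringEdges (E \ F) A).ncard := by
        intro A hA hne
        convert h2 A (fun hs => hA hs hF.root_mem) hne using 2
        ext e
        exact ⟨fun ⟨⟨he, _⟩, h⟩ => ⟨he, h⟩,
          fun ⟨he, h⟩ => ⟨⟨he, fun heF => hA h.2 (hF.head_mem e heF)⟩, h⟩⟩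
      obtain ⟨e, he, he1, he2, hP'⟩ := exists_edge_forall_reaches_sdiff hF.root_mem hP hcut hS
      refine ⟨e.1, he1, e.2, he2, he.1, ?_⟩
      rwa [sdiff_sdiff, union_comm, ← insert_eq] at hP'
  obtain ⟨T₂, hT₂⟩ := exists_isSpanningTree hrest
  exact ⟨T₁, T₂, hT₁, hT₂.mono_s11 sdiff_subset,
    disjoint_left.2 fun e he₁ he₂ => (hT₂.1 he₂).2 he₁⟩

theorem IsSpanningTree.ncard_le [Fintype V] {E T : Set (V × V)} {s : V}
    (h : IsSpanningTree E s T) : T.ncard ≤ Fintype.card V - 1 := by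
  have hinj : InjOn Prod.snd T := fun e he f hf hef => by
    obtain ⟨_, _, huniq⟩ := h.2.2.1 e.2 (h.2.2.2 e he)
    exact (huniq e ⟨he, rfl⟩).trans (huniq f ⟨hf, hef.symm⟩).symm
  calc T.ncard ≤ ({s}ᶜ : Set V).ncard := ncard_le_ncard_of_injOn _ h.2.2.2 hinj
    _ = Fintype.card V - 1 := by rw [ncard_compl, ncard_singleton, Nat.card_eq_fintype_card]

theorem Is2ECGraph.two_mul_card_le_ncard [Fintype V] [Nontrivial V] {F : Set (V × V)}
    (hF : Is2ECGraph F) : 2 * Fintype.card V ≤ F.ncard := by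
  have hdisj : Pairwise (Function.onFun Disjoint fun v : V => enteringEdges F {v}) :=
    fun v w hvw => disjoint_left.2 fun e hv hw => hvw (hv.2.2.symm.trans hw.2.2)
  calc 2 * Fintype.card V = ∑ _ : V, 2 := by simp [mul_comm]
    _ ≤ ∑ v, (enteringEdges F {v}).ncard := Finset.sum_le_sum fun v _ => by
      obtain ⟨u, hu⟩ := exists_ne v
      exact hF.two_le_ncard_enteringEdges (A := {v}) hu rfl
    _ = (⋃ v, enteringEdges F {v}).ncard := by
      rw [ncard_iUnion_of_finite (fun _ => toFinite _) hdisj, finsum_eq_sum_of_fintype]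
    _ ≤ F.ncard := ncard_le_ncard (iUnion_subset fun _ _ he => he.1)

theorem stmt11 [Fintype V] (E : Set (V × V)) (s : V) (hG : Is2ECGraph E)
    (n : ℕ) (hn : n = Fintype.card V) :
    (∃ T₁ T₂ : Set (V × V), IsSpanningTree E s T₁ ∧ IsSpanningTree E s T₂ ∧
      Disjoint T₁ T₂) ∧
    (∃ T₃ T₄ : Set (V × V), IsSpanningTree (revE E) s T₃ ∧
      IsSpanningTree (revE E) s T₄ ∧ Disjoint T₃ T₄) ∧
    ∀ T₁ T₂ T₃ T₄ : Set (V × V),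
      IsSpanningTree E s T₁ → IsSpanningTree E s T₂ → Disjoint T₁ T₂ →
      IsSpanningTree (revE E) s T₃ → IsSpanningTree (revE E) s T₄ → Disjoint T₃ T₄ →
      Is2ECGraph (T₁ ∪ T₂ ∪ Prod.swap '' (T₃ ∪ T₄)) ∧
      (T₁ ∪ T₂ ∪ Prod.swap '' (T₃ ∪ T₄)) ⊆ E ∧
      (T₁ ∪ T₂ ∪ Prod.swap '' (T₃ ∪ T₄)).ncard ≤ 4 * (n - 1) ∧
      ∀ F : Set (V × V), F ⊆ E → Is2ECGraph F →
        (T₁ ∪ T₂ ∪ Prod.swap '' (T₃ ∪ T₄)).ncard ≤ 2 * F.ncard := by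
  have two_cuts {E : Set (V × V)} (hG : Is2ECGraph E) (A : Set V) (hs : s ∉ A) :
      A.Nonempty → 2 ≤ (enteringEdges E A).ncard := fun ⟨_, hv⟩ =>
    hG.two_le_ncard_enteringEdges hs hv
  refine ⟨exists_disjoint_isSpanningTree (two_cuts hG),
    exists_disjoint_isSpanningTree (two_cuts hG.revE), ?_⟩
  intro T₁ T₂ T₃ T₄ h₁ h₂ h₁₂ h₃ h₄ h₃₄
  have to_s {T : Set (V × V)} (hT : IsSpanningTree (revE E) s T) (u : V) :
      Reaches (Prod.swap '' T) u s := revE_eq_image_swap T ▸ (hT.2.1 u).rev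
  have hcard : (T₁ ∪ T₂ ∪ Prod.swap '' (T₃ ∪ T₄)).ncard ≤ 4 * (n - 1) := by
    have hall := ncard_union_le (T₁ ∪ T₂) (Prod.swap '' (T₃ ∪ T₄))
    rw [ncard_image_of_injective _ Prod.swap_injective] at hall
    have := ncard_union_le T₁ T₂
    have := ncard_union_le T₃ T₄
    have := h₁.ncard_le; have := h₂.ncard_le; have := h₃.ncard_le; have := h₄.ncard_le
    omega
  refine ⟨?_, union_subset (union_subset h₁.1 h₂.1) (image_subset_iff.2 (union_subset h₃.1 h₄.1)),
    hcard, fun F _ hF => ?_⟩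
  · rw [image_union]
    exact is2ECGraph_union h₁₂ ((disjoint_image_iff Prod.swap_injective).2 h₃₄) h₁.2.1 h₂.2.1
      (to_s h₃) (to_s h₄)
  · rcases subsingleton_or_nontrivial V with hV | hV
    · have : n ≤ 1 := hn ▸ Fintype.card_le_one_iff_subsingleton.2 hV
      omega
    · have := hF.two_mul_card_le_ncard
      omega
end
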